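/- arXiv:1708.00475 — 4 statements merged into one kernel-verified Lean document; each statement's English description precedes it below -/
import Mathlib

section
/- Let $g, s \in \mathbb{R}^n$ with $s \neq 0$, $H \in \mathbb{R}^{n\times n}$ symmetric with $\|H\| \leq H_{max}$, $\lambda \geq 0$, and $\kappa_1 > 0$. Suppose that $g^T s + \tfrac12 s^T H s \leq 0$ and $s^T(g + (H+\lambda I)s) \leq \kappa_1 \|s\|^2$. Then $\lambda \leq 2\|g\|/\|s\| + \tfrac32 H_{max} + \kappa_1$. -/
open scoped InnerProductSpace

section

variable {E : Type*} [NormedAddCommGroup E] [InnerProductSpace ℝ E]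

theorem neg_opNorm_mul_sq_le_inner_apply_self (H : E →L[ℝ] E) (s : E) :
    -(‖H‖ * ‖s‖ ^ 2) ≤ ⟪s, H s⟫_ℝ := by
  refine neg_le_of_abs_le ?_
  calc |⟪s, H s⟫_ℝ| ≤ ‖s‖ * ‖H s‖ := abs_real_inner_le_norm s (H s)
    _ ≤ ‖s‖ * (‖H‖ * ‖s‖) := by gcongr; exact H.le_opNorm s
    _ = ‖H‖ * ‖s‖ ^ 2 := by ring

theorem le_of_inner_add_smul_le (g s : E) (H : E →L[ℝ] E) {lm κ : ℝ} (hs : s ≠ 0)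
    (h : ⟪s, g + (H s + lm • s)⟫_ℝ ≤ κ * ‖s‖ ^ 2) :
    lm ≤ ‖g‖ / ‖s‖ + ‖H‖ + κ := by
  have hs_pos : 0 < ‖s‖ := norm_pos_iff.mpr hs
  rw [inner_add_right, inner_add_right, real_inner_smul_right,
    real_inner_self_eq_norm_sq] at h
  have hg : -(‖s‖ * ‖g‖) ≤ ⟪s, g⟫_ℝ := neg_le_of_abs_le (abs_real_inner_le_norm s g)
  have hH := neg_opNorm_mul_sq_le_inner_apply_self H s
  refine le_of_mul_le_mul_right ?_ (pow_pos hs_pos 2)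
  calc lm * ‖s‖ ^ 2 ≤ ‖s‖ * ‖g‖ + ‖H‖ * ‖s‖ ^ 2 + κ * ‖s‖ ^ 2 := by linarith
    _ = (‖g‖ / ‖s‖ + ‖H‖ + κ) * ‖s‖ ^ 2 := by field_simp

end

theorem stmt_0_general {n : ℕ} (g s : EuclideanSpace ℝ (Fin n))
    (H : EuclideanSpace ℝ (Fin n) →L[ℝ] EuclideanSpace ℝ (Fin n))
    (Hmax : ℝ) (hHmax : ‖H‖ ≤ Hmax)
    (lm κ₁ : ℝ) (hs : s ≠ 0)
    (h2 : ⟪s, g + (H s + lm • s)⟫_ℝ ≤ κ₁ * ‖s‖ ^ 2) :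
    lm ≤ 2 * ‖g‖ / ‖s‖ + (3/2) * Hmax + κ₁ := by
  have hlm := le_of_inner_add_smul_le g s H hs h2
  have hH : 0 ≤ ‖H‖ := norm_nonneg H
  have hgs : 0 ≤ ‖g‖ / ‖s‖ := by positivity
  rw [mul_div_assoc]
  linarith

theorem stmt_0 {n : ℕ} (g s : EuclideanSpace ℝ (Fin n))
    (H : EuclideanSpace ℝ (Fin n) →L[ℝ] EuclideanSpace ℝ (Fin n))
    (hH : IsSelfAdjoint H) (Hmax : ℝ) (hHmax : ‖H‖ ≤ Hmax)
    (lm κ₁ : ℝ) (hlam : 0 ≤ lm) (hκ₁ : 0 < κ₁) (hs : s ≠ 0)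
    (h1 : ⟪g, s⟫_ℝ + (1/2) * ⟪s, H s⟫_ℝ ≤ 0)
    (h2 : ⟪s, g + (H s + lm • s)⟫_ℝ ≤ κ₁ * ‖s‖ ^ 2) :
    lm ≤ 2 * ‖g‖ / ‖s‖ + (3/2) * Hmax + κ₁ :=
  stmt_0_general g s H Hmax hHmax lm κ₁ hs h2
end

section
/- Let $f : \mathbb{R}^n \to \mathbb{R}$ be twice continuously differentiable with Hessian Lipschitz constant $H_{Lip} > 0$ on the segment $[x, x+s]$, where $s \neq 0$. Let $g = \nabla f(x)$, $H = \nabla^2 f(x)$, and let $\lambda \geq 0$ and $\kappa_2, \eta > 0$. If $s^T(g + (H+\lambda I)s) \leq \tfrac12 s^T(H+\lambda I)s + \tfrac12 \kappa_2\|s\|^3$ and $\lambda \geq (H_{Lip} + \kappa_2 + 2\eta)\|s\|$, then $f(x) - f(x+s) \geq \eta \|s\|^3$. -/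
/-!
On the segment `[x, x + s]` the Hessian stays within `HLip * ‖s‖` of `H = ∇²f(x)`, so along
`t ↦ f (x + t • s)` the slope exceeds that of the quadratic model by at most
`HLip * ‖s‖³ * t`; integrating, `f (x + s)` exceeds the model value
`f x + ⟪g, s⟫ + ⟪s, H s⟫ / 2` by at most `HLip / 2 * ‖s‖³`. The hypothesis on `s` makes the
model decrease at least `(lm - κ₂ * ‖s‖) / 2 * ‖s‖²`, which by the lower bound on `lm` is at
least `(HLip / 2 + η) * ‖s‖³`.
-/

open scoped InnerProductSpace
open Set

theorem add_smul_mem_segment {E : Type*} [AddCommGroup E] [Module ℝ E] (x s : E) {t : ℝ}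
    (ht : t ∈ Icc (0 : ℝ) 1) : x + t • s ∈ segment ℝ x (x + s) := by
  rw [segment_eq_image']
  exact ⟨t, ht, by simp⟩

theorem LipschitzOnWith.dist_left_le_of_mem_segment {E M : Type*} [NormedAddCommGroup E]
    [NormedSpace ℝ E] [PseudoMetricSpace M] {K : NNReal} {φ : E → M} {x y z : E}
    (h : LipschitzOnWith K φ (segment ℝ x y)) (hz : z ∈ segment ℝ x y) :
    dist (φ z) (φ x) ≤ K * dist x y :=
  (h.dist_le_mul z hz x (left_mem_segment ℝ x y)).trans <|
    mul_le_mul_of_nonneg_left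
      (by simpa using segment_subset_closedBall_left x y hz) K.coe_nonneg

theorem sub_le_of_hasDerivAt_le_affine {φ φ' : ℝ → ℝ} {a b : ℝ}
    (hφ : ∀ t ∈ Icc (0 : ℝ) 1, HasDerivAt φ (φ' t) t)
    (hle : ∀ t ∈ Ioo (0 : ℝ) 1, φ' t ≤ a + b * t) :
    φ 1 - φ 0 ≤ a + b / 2 := by
  let ψ : ℝ → ℝ := fun t ↦ φ t - (a * t + b / 2 * t ^ 2)
  have hψ : ∀ t ∈ Icc (0 : ℝ) 1, HasDerivAt ψ (φ' t - (a + b * t)) t := fun t ht ↦ by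
    refine ((hφ t ht).sub (((hasDerivAt_id t).const_mul a).add
      ((hasDerivAt_pow 2 t).const_mul (b / 2)))).congr_deriv ?_
    norm_num; ring
  have hanti : AntitoneOn ψ (Icc 0 1) := by
    refine antitoneOn_of_hasDerivWithinAt_nonpos (f' := fun t ↦ φ' t - (a + b * t))
      (convex_Icc 0 1) (fun t ht ↦ (hψ t ht).continuousAt.continuousWithinAt)
      (fun t ht ↦ ?_) (fun t ht ↦ ?_)
    · rw [interior_Icc] at ht
      exact (hψ t (Ioo_subset_Icc_self ht)).hasDerivWithinAt
    · rw [interior_Icc] at ht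
      exact sub_nonpos.mpr (hle t ht)
  have := hanti (left_mem_Icc.mpr zero_le_one) (right_mem_Icc.mpr zero_le_one) zero_le_one
  simp only [ψ] at this
  linarith

section Gradient

variable {F : Type*} [NormedAddCommGroup F] [InnerProductSpace ℝ F] [CompleteSpace F]

theorem ContDiff.gradient {f : F → ℝ} {n : WithTop ℕ∞} (hf : ContDiff ℝ (n + 1) f) :
    ContDiff ℝ n (_root_.gradient f) := by
  have hgrad : _root_.gradient f = (InnerProductSpace.toDual ℝ F).symm ∘ fderiv ℝ f := by
    funext z
    simp [← toDual_gradient]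
  rw [hgrad]
  exact (InnerProductSpace.toDual ℝ F).symm.contDiff.comp (hf.fderiv_right le_rfl)

theorem image_add_le_of_norm_fderiv_gradient_sub_le {f : F → ℝ} {x s : F} {H : F →L[ℝ] F}
    {C : ℝ} (hf : ∀ z ∈ segment ℝ x (x + s), DifferentiableAt ℝ f z)
    (hg : ∀ z ∈ segment ℝ x (x + s), DifferentiableAt ℝ (gradient f) z)
    (hH : ∀ z ∈ segment ℝ x (x + s), ‖fderiv ℝ (gradient f) z - H‖ ≤ C) :
    f (x + s) ≤ f x + ⟪gradient f x, s⟫_ℝ + ⟪H s, s⟫_ℝ / 2 + C / 2 * ‖s‖ ^ 2 := by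
  have hderiv : ∀ t ∈ Icc (0 : ℝ) 1,
      HasDerivAt (fun t : ℝ ↦ f (x + t • s)) ⟪gradient f (x + t • s), s⟫_ℝ t := by
    intro t ht
    have hline : HasDerivAt (fun t : ℝ ↦ x + t • s) s t := by
      simpa using ((hasDerivAt_id t).smul_const s).const_add x
    rw [inner_gradient_left]
    exact (hf _ (add_smul_mem_segment x s ht)).hasFDerivAt.comp_hasDerivAt t hline
  have hgrad_error : ∀ t ∈ Icc (0 : ℝ) 1,
      ‖gradient f (x + t • s) - gradient f x - t • H s‖ ≤ C * (t * ‖s‖) := by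
    intro t ht
    have := (convex_segment x (x + s)).norm_image_sub_le_of_norm_fderiv_le' hg hH
      (left_mem_segment ℝ x (x + s)) (add_smul_mem_segment x s ht)
    simpa [norm_smul, abs_of_nonneg ht.1] using this
  have hslope : ∀ t ∈ Ioo (0 : ℝ) 1, ⟪gradient f (x + t • s), s⟫_ℝ ≤
      ⟪gradient f x, s⟫_ℝ + (⟪H s, s⟫_ℝ + C * ‖s‖ ^ 2) * t := fun t ht ↦ by
    have hsplit : ⟪gradient f (x + t • s), s⟫_ℝ =
        ⟪gradient f x, s⟫_ℝ + t * ⟪H s, s⟫_ℝ +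
          ⟪gradient f (x + t • s) - gradient f x - t • H s, s⟫_ℝ := by
      simp only [inner_sub_left, real_inner_smul_left]; ring
    have := (real_inner_le_norm _ s).trans <| mul_le_mul_of_nonneg_right
      (hgrad_error t (Ioo_subset_Icc_self ht)) (norm_nonneg s)
    rw [hsplit]
    linarith
  have := sub_le_of_hasDerivAt_le_affine hderiv hslope
  simp only [one_smul, zero_smul, add_zero] at this
  linarith

end Gradient

theorem stmt_3_general {n : ℕ} (f : EuclideanSpace ℝ (Fin n) → ℝ)
    (x s : EuclideanSpace ℝ (Fin n)) (HLip lm κ₂ η : ℝ)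
    (hHLip : 0 < HLip)
    (hf : ContDiff ℝ 2 f)
    (hlip : LipschitzOnWith HLip.toNNReal (fun y => fderiv ℝ (gradient f) y)
      (segment ℝ x (x + s)))
    (h1 : ⟪s, gradient f x + (fderiv ℝ (gradient f) x s + lm • s)⟫_ℝ ≤
      (1/2) * ⟪s, fderiv ℝ (gradient f) x s + lm • s⟫_ℝ + (1/2) * κ₂ * ‖s‖ ^ 3)
    (h2 : lm ≥ (HLip + κ₂ + 2 * η) * ‖s‖) :
    f x - f (x + s) ≥ η * ‖s‖ ^ 3 := by
  have hgrad : Differentiable ℝ (gradient f) :=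
    (hf.gradient (n := 1)).differentiable one_ne_zero
  have hhess : ∀ z ∈ segment ℝ x (x + s),
      ‖fderiv ℝ (gradient f) z - fderiv ℝ (gradient f) x‖ ≤ HLip * ‖s‖ := by
    intro z hz
    simpa [dist_eq_norm, Real.coe_toNNReal _ hHLip.le] using hlip.dist_left_le_of_mem_segment hz
  have htaylor := image_add_le_of_norm_fderiv_gradient_sub_le
    (fun z _ ↦ hf.differentiable two_ne_zero z) (fun z _ ↦ hgrad z) hhess
  rw [real_inner_comm s, real_inner_comm s] at htaylor
  simp only [inner_add_right, real_inner_smul_right, real_inner_self_eq_norm_sq] at h1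
  have hlm_cube : (HLip + κ₂ + 2 * η) * ‖s‖ ^ 3 ≤ lm * ‖s‖ ^ 2 := by
    nlinarith [sq_nonneg ‖s‖]
  linarith

theorem stmt_3 {n : ℕ} (f : EuclideanSpace ℝ (Fin n) → ℝ)
    (x s : EuclideanSpace ℝ (Fin n)) (hs : s ≠ 0) (HLip lm κ₂ η : ℝ)
    (hHLip : 0 < HLip) (hlm : 0 ≤ lm) (hκ₂ : 0 < κ₂) (hη : 0 < η)
    (hf : ContDiff ℝ 2 f)
    (hlip : LipschitzOnWith HLip.toNNReal (fun y => fderiv ℝ (gradient f) y)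
      (segment ℝ x (x + s)))
    (h1 : ⟪s, gradient f x + (fderiv ℝ (gradient f) x s + lm • s)⟫_ℝ ≤
      (1/2) * ⟪s, fderiv ℝ (gradient f) x s + lm • s⟫_ℝ + (1/2) * κ₂ * ‖s‖ ^ 3)
    (h2 : lm ≥ (HLip + κ₂ + 2 * η) * ‖s‖) :
    f x - f (x + s) ≥ η * ‖s‖ ^ 3 :=
  stmt_3_general f x s HLip lm κ₂ η hHLip hf hlip h1 h2
end

section
/- Consider the optimization problem of minimizing $\phi(s,\lambda) = f + g^T s + \tfrac12 s^T (H + \lambda I) s$ over $(s, \lambda) \in \mathbb{R}^n \times \mathbb{R}_{\geq 0}$ subject to $(\sigma_L)^2\|s\|^2 \leq \lambda^2 \leq (\sigma_U)^2\|s\|^2$, with $0 < \sigma_L \leq \sigma_U$ and $g \neq 0$. Then any KKT point $(s_k, \lambda_k, \beta^L_k, \beta^U_k, \beta^N_k)$ of this problem (with Lagrangian as in the paper) satisfies $\lambda_k > 0$, $\beta^N_k = 0$, $\beta^L_k > 0$, and $\lambda_k = \sigma_L \|s_k\|$. -/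
/-!
A nonzero gradient forces `s ≠ 0`, so the lower constraint `σL‖s‖ ≤ λ` makes `λ > 0`, and
complementarity with `λ ≥ 0` kills `βN`. The multiplier equation then reads
`‖s‖² / 2 = λ (βL - βU)` with positive left side, so `βL > βU ≥ 0`; finally `βL > 0` makes the
lower constraint active, `λ² = σL²‖s‖²`, and both sides are nonnegative.
-/

open scoped InnerProductSpace

theorem ne_zero_of_add_apply_add_smul_eq_zero {R M : Type*} [Ring R] [AddCommGroup M]
    [Module R M] (H : M →ₗ[R] M) {g s : M} {a b c : R} (hg : g ≠ 0)
    (h : g + (H s + a • s) + b • s - c • s = 0) : s ≠ 0 := by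
  rintro rfl
  simp only [map_zero, smul_zero, add_zero, sub_zero] at h
  exact hg h

theorem lt_of_half_mul_eq_mul_sub {q lm βL βU : ℝ} (hq : 0 < q) (hlm : 0 ≤ lm)
    (h : (1 / 2) * q = lm * (βL - βU)) : βU < βL := by
  have : 0 < lm * (βL - βU) := by linarith
  linarith [pos_of_mul_pos_right this hlm]

theorem eq_of_mul_sq_sub_sq_eq_zero {β x y : ℝ} (hβ : 0 < β) (hx : 0 ≤ x) (hy : 0 ≤ y)
    (h : β * (x ^ 2 - y ^ 2) = 0) : x = y :=
  (sq_eq_sq₀ hx hy).mp (sub_eq_zero.mp ((mul_eq_zero.mp h).resolve_left hβ.ne'))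

theorem stmt_10_general {n : ℕ} (g s : EuclideanSpace ℝ (Fin n)) (hg : g ≠ 0)
    (H : EuclideanSpace ℝ (Fin n) →L[ℝ] EuclideanSpace ℝ (Fin n))
    (σL σU lm βL βU βN : ℝ)
    (hσL : 0 < σL) (hlm : 0 ≤ lm)
    (kkt1 : g + (H s + lm • s) + (βL * σL ^ 2) • s - (βU * σU ^ 2) • s = 0)
    (kkt2 : (1/2) * ‖s‖ ^ 2 - lm * (βL - βU) - βN = 0)
    (kkt3 : 0 ≤ βL ∧ 0 ≤ lm ^ 2 - σL ^ 2 * ‖s‖ ^ 2 ∧ βL * (lm ^ 2 - σL ^ 2 * ‖s‖ ^ 2) = 0)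
    (kkt4 : 0 ≤ βU ∧ lm ^ 2 - σU ^ 2 * ‖s‖ ^ 2 ≤ 0 ∧ βU * (lm ^ 2 - σU ^ 2 * ‖s‖ ^ 2) = 0)
    (kkt5 : 0 ≤ βN ∧ βN * lm = 0) :
    0 < lm ∧ βN = 0 ∧ 0 < βL ∧ lm = σL * ‖s‖ := by
  have hs : 0 < ‖s‖ :=
    norm_pos_iff.mpr (ne_zero_of_add_apply_add_smul_eq_zero H.toLinearMap hg kkt1)
  have hlm_pos : 0 < lm := by
    refine lt_of_pow_lt_pow_left₀ 2 hlm ?_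
    nlinarith [kkt3.2.1, mul_pos (pow_pos hσL 2) (pow_pos hs 2)]
  have hβN : βN = 0 := (mul_eq_zero.mp kkt5.2).resolve_right hlm_pos.ne'
  have hβL : 0 < βL :=
    kkt4.1.trans_lt (lt_of_half_mul_eq_mul_sub (pow_pos hs 2) hlm (by linarith))
  refine ⟨hlm_pos, hβN, hβL, eq_of_mul_sq_sub_sq_eq_zero hβL hlm (by positivity) ?_⟩
  rw [mul_pow]
  exact kkt3.2.2

theorem stmt_10 {n : ℕ} (g s : EuclideanSpace ℝ (Fin n)) (hg : g ≠ 0)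
    (H : EuclideanSpace ℝ (Fin n) →L[ℝ] EuclideanSpace ℝ (Fin n))
    (hH : IsSelfAdjoint H) (σL σU lm βL βU βN : ℝ)
    (hσL : 0 < σL) (hσLU : σL ≤ σU) (hlm : 0 ≤ lm)
    (kkt1 : g + (H s + lm • s) + (βL * σL ^ 2) • s - (βU * σU ^ 2) • s = 0)
    (kkt2 : (1/2) * ‖s‖ ^ 2 - lm * (βL - βU) - βN = 0)
    (kkt3 : 0 ≤ βL ∧ 0 ≤ lm ^ 2 - σL ^ 2 * ‖s‖ ^ 2 ∧ βL * (lm ^ 2 - σL ^ 2 * ‖s‖ ^ 2) = 0)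
    (kkt4 : 0 ≤ βU ∧ lm ^ 2 - σU ^ 2 * ‖s‖ ^ 2 ≤ 0 ∧ βU * (lm ^ 2 - σU ^ 2 * ‖s‖ ^ 2) = 0)
    (kkt5 : 0 ≤ βN ∧ βN * lm = 0) :
    0 < lm ∧ βN = 0 ∧ 0 < βL ∧ lm = σL * ‖s‖ :=
  stmt_10_general g s hg H σL σU lm βL βU βN hσL hlm kkt1 kkt2 kkt3 kkt4 kkt5
end

section
/- Consider the KKT conditions for minimizing $f + g^T s + \tfrac12 s^T(H + \lambda I)s$ over $(s,\lambda) \in \mathbb{R}^n \times \mathbb{R}_{\geq 0}$ subject to $0 \leq \lambda^2 \leq \sigma_U^2\|s\|^2$ (i.e., the lower ratio bound is $\sigma_L = 0$), with $g \neq 0$. Then any KKT point has $\lambda_k = 0$. -/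
open scoped InnerProductSpace

/-! If `λ > 0`, complementarity kills `βL` and `βN`, so the second KKT equation reads
`‖s‖² / 2 = -λ βU ≤ 0`, i.e. `s = 0`; but then stationarity gives `g = 0`. -/

theorem ne_zero_of_stationarity {R M F : Type*} [Ring R] [AddCommGroup M] [Module R M]
    [FunLike F M M] [ZeroHomClass F M M] {g s : M} (hg : g ≠ 0) (H : F) (lm c : R)
    (hstat : g + (H s + lm • s) - c • s = 0) : s ≠ 0 := by
  rintro rfl
  exact hg (by simpa using hstat)

theorem stmt_11_general {n : ℕ} (g s : EuclideanSpace ℝ (Fin n)) (hg : g ≠ 0)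
    (H : EuclideanSpace ℝ (Fin n) →L[ℝ] EuclideanSpace ℝ (Fin n))
    (σU lm βL βU βN : ℝ)
    (hlm : 0 ≤ lm)
    (kkt1 : g + (H s + lm • s) - (βU * σU ^ 2) • s = 0)
    (kkt2 : (1/2) * ‖s‖ ^ 2 - lm * (βL - βU) - βN = 0)
    (kkt3 : 0 ≤ βL ∧ 0 ≤ lm ^ 2 ∧ βL * lm ^ 2 = 0)
    (kkt4 : 0 ≤ βU ∧ lm ^ 2 - σU ^ 2 * ‖s‖ ^ 2 ≤ 0 ∧ βU * (lm ^ 2 - σU ^ 2 * ‖s‖ ^ 2) = 0)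
    (kkt5 : 0 ≤ βN ∧ βN * lm = 0) :
    lm = 0 := by
  by_contra hne
  have hpos : 0 < lm := lt_of_le_of_ne hlm (Ne.symm hne)
  have hβN : βN = 0 := (mul_eq_zero.mp kkt5.2).resolve_right hne
  have hβL : βL = 0 := (mul_eq_zero.mp kkt3.2.2).resolve_right (pow_ne_zero 2 hne)
  have hnorm : ‖s‖ ^ 2 = -2 * (lm * βU) := by
    rw [hβN, hβL] at kkt2
    linarith
  have hs : ‖s‖ ^ 2 ≤ 0 := by
    rw [hnorm]
    nlinarith [mul_nonneg hpos.le kkt4.1]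
  exact ne_zero_of_stationarity hg H lm _ kkt1 <| norm_eq_zero.mp <|
    pow_eq_zero_iff two_ne_zero |>.mp <| le_antisymm hs (sq_nonneg _)

theorem stmt_11 {n : ℕ} (g s : EuclideanSpace ℝ (Fin n)) (hg : g ≠ 0)
    (H : EuclideanSpace ℝ (Fin n) →L[ℝ] EuclideanSpace ℝ (Fin n))
    (hH : IsSelfAdjoint H) (σU lm βL βU βN : ℝ)
    (hσU : 0 < σU) (hlm : 0 ≤ lm)
    (kkt1 : g + (H s + lm • s) - (βU * σU ^ 2) • s = 0)
    (kkt2 : (1/2) * ‖s‖ ^ 2 - lm * (βL - βU) - βN = 0)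
    (kkt3 : 0 ≤ βL ∧ 0 ≤ lm ^ 2 ∧ βL * lm ^ 2 = 0)
    (kkt4 : 0 ≤ βU ∧ lm ^ 2 - σU ^ 2 * ‖s‖ ^ 2 ≤ 0 ∧ βU * (lm ^ 2 - σU ^ 2 * ‖s‖ ^ 2) = 0)
    (kkt5 : 0 ≤ βN ∧ βN * lm = 0) :
    lm = 0 :=
  stmt_11_general g s hg H σU lm βL βU βN hlm kkt1 kkt2 kkt3 kkt4 kkt5
end
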